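/- Fix n ≥ 1. Let j : ℝⁿ → ℝⁿ⁺¹ be the inclusion x ↦ (x, 0) and let e = (0, …, 0, 1) ∈ ℝⁿ⁺¹, both viewed inside the positive definite Clifford algebra Cl_{n+1,0}, so that Q_{n+1,0}(j ξ) = −Q_{0,n}(ξ) for all ξ ∈ ℝⁿ and Q_{n+1,0}(e) = 1. Then there is a unique group homomorphism φ : Pin_{0,n} → (Cl_{n+1,0})ˣ satisfying φ(ι(ξ)) = ι(j ξ) * ι(e) for every ξ ∈ ℝⁿ with Q_{0,n}(ξ) = −1; moreover φ is injective and its image is contained in the Spin group Spin_{n+1,0}. Thus Pin⁻_n embeds into Spin_{n+1}. -/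

import Mathlib

noncomputable section
open CliffordAlgebra

/-- The diagonal quadratic form on `ℝⁿ` whose first `p` coefficients are `+1`
and whose remaining coefficients are `-1`; for `n = p + q` this is `Q_{p,q}`. -/
def Qsig (n p : ℕ) : QuadraticForm ℝ (Fin n → ℝ) :=
  QuadraticMap.weightedSumSquares ℝ (fun i : Fin n => if (i : ℕ) < p then (1 : ℝ) else -1)

/-- The Pin group of a real quadratic form `Q`: the subgroup of the unit group of the
Clifford algebra generated by the units whose value is `ι Q ξ` for some vector `ξ`
with `Q ξ = 1` or `Q ξ = -1`. -/
def pinGrp {V : Type*} [AddCommGroup V] [Module ℝ V] (Q : QuadraticForm ℝ V) :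
    Subgroup (CliffordAlgebra Q)ˣ :=
  Subgroup.closure {u : (CliffordAlgebra Q)ˣ |
    ∃ ξ : V, (↑u : CliffordAlgebra Q) = ι Q ξ ∧ (Q ξ = 1 ∨ Q ξ = -1)}

/-- The inverse of a unit whose value lies in the even part of the Clifford algebra
also has value in the even part. -/
theorem unit_inv_mem_evenOdd_zero {V : Type*} [AddCommGroup V] [Module ℝ V]
    {Q : QuadraticForm ℝ V} {u : (CliffordAlgebra Q)ˣ}
    (hu : (↑u : CliffordAlgebra Q) ∈ evenOdd Q 0) :
    (↑u⁻¹ : CliffordAlgebra Q) ∈ evenOdd Q 0 := by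
  classical
  set A := evenOdd Q with hA
  set x : CliffordAlgebra Q := (↑u⁻¹ : CliffordAlgebra Q) with hx
  -- decompose x into even and odd parts
  have huniv : (Finset.univ : Finset (ZMod 2)) = {0, 1} := by decide
  have hsum : ∑ i : ZMod 2, DirectSum.of (fun i => A i) i (DirectSum.decompose A x i)
      = DirectSum.decompose A x := DirectSum.sum_univ_of _
  have hx01 : x = (DirectSum.decompose A x 0 : CliffordAlgebra Q)
      + (DirectSum.decompose A x 1 : CliffordAlgebra Q) := by
    have h := congrArg (DirectSum.decompose A).symm hsum
    rw [Equiv.symm_apply_apply, huniv, Finset.sum_insert (by decide),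
      Finset.sum_singleton, DirectSum.decompose_symm_add, DirectSum.decompose_symm_of,
      DirectSum.decompose_symm_of] at h
    exact h.symm
  have h1 : (1 : CliffordAlgebra Q)
      = ↑u * (DirectSum.decompose A x 0 : CliffordAlgebra Q)
        + ↑u * (DirectSum.decompose A x 1 : CliffordAlgebra Q) := by
    rw [← mul_add, ← hx01, hx, Units.mul_inv]
  have hm0 : ↑u * (DirectSum.decompose A x 0 : CliffordAlgebra Q) ∈ A 0 := by
    simpa using SetLike.mul_mem_graded hu (DirectSum.decompose A x 0).2
  have hm1 : ↑u * (DirectSum.decompose A x 1 : CliffordAlgebra Q) ∈ A 1 := by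
    simpa using SetLike.mul_mem_graded hu (DirectSum.decompose A x 1).2
  have hodd : ↑u * (DirectSum.decompose A x 1 : CliffordAlgebra Q) = 0 := by
    have := congrArg (fun y => (DirectSum.decompose A y 1 : CliffordAlgebra Q)) h1
    simp only [DirectSum.decompose_add, DirectSum.add_apply, Submodule.coe_add] at this
    rw [DirectSum.decompose_of_mem_ne A (SetLike.one_mem_graded A) (by decide : (0 : ZMod 2) ≠ 1),
      DirectSum.decompose_of_mem_ne A hm0 (by decide : (0 : ZMod 2) ≠ 1),
      DirectSum.decompose_of_mem_same A hm1] at this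
    simpa using this.symm
  have hd1 : (DirectSum.decompose A x 1 : CliffordAlgebra Q) = 0 := by
    have := congrArg (fun y => (↑u⁻¹ : CliffordAlgebra Q) * y) hodd
    simpa [← mul_assoc] using this
  rw [hx01, hd1, add_zero]
  exact (DirectSum.decompose A x 0).2

/-- The Spin group of a real quadratic form: the subgroup of the Pin group consisting of
elements whose underlying Clifford algebra element is even. -/
def spinGrp {V : Type*} [AddCommGroup V] [Module ℝ V] (Q : QuadraticForm ℝ V) :
    Subgroup (CliffordAlgebra Q)ˣ where
  carrier := {u | u ∈ pinGrp Q ∧ (↑u : CliffordAlgebra Q) ∈ evenOdd Q 0}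
  one_mem' := ⟨one_mem _, SetLike.one_mem_graded _⟩
  mul_mem' := fun ha hb => ⟨mul_mem ha.1 hb.1, by
    simpa using SetLike.mul_mem_graded ha.2 hb.2⟩
  inv_mem' := fun ha => ⟨inv_mem ha.1, unit_inv_mem_evenOdd_zero ha.2⟩

/-- The inclusion `ℝⁿ → ℝⁿ⁺¹`, `x ↦ (x, 0)`. -/
def jmap (n : ℕ) (x : Fin n → ℝ) : Fin (n + 1) → ℝ := Fin.snoc x 0

/-- The last standard basis vector `e = (0, …, 0, 1) ∈ ℝⁿ⁺¹`. -/
def elast (n : ℕ) : Fin (n + 1) → ℝ := Pi.single (Fin.last n) 1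

/-! The map `ξ ↦ j(ξ) e` extends to an injective algebra map `Cl_{0,n} → Cl_{n+1,0}`:
`Cl(Q) ≅ Cl⁰(Q ⊕ ⟨-1⟩)` via `ξ ↦ e ξ`, `Cl⁰(P) ≅ Cl⁰(-P)` via `e ξ ↦ -e ξ = ξ e`, and
`-(Q_{0,n} ⊕ ⟨-1⟩)` is `Q_{n+1,0}`. Its restriction to `Pin_{0,n}` is `φ`; it is unique because
`Pin_{0,n}` is generated by the `ι ξ`, all with `Q_{0,n}(ξ) = -1` since `Q_{0,n}` is negative
definite, and it lands in `Spin_{n+1,0}` because each `ι(j ξ) ι(e)` is a product of two unit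
vectors. -/

namespace CliffordAlgebra

open EquivEven

variable {R M : Type*} [CommRing R] [AddCommGroup M] [Module R M] (Q : QuadraticForm R M)

def toEvenNeg : CliffordAlgebra Q →ₐ[R] CliffordAlgebra (-Q' Q) :=
  (even (-Q' Q)).val.comp ((evenEquivEvenNeg (Q' Q)).toAlgHom.comp (toEven Q))

theorem toEvenNeg_injective : Function.Injective (toEvenNeg Q) :=
  Subtype.val_injective.comp <| (evenEquivEvenNeg (Q' Q)).injective.comp (equivEven Q).injective

theorem toEvenNeg_ι (m : M) :
    toEvenNeg Q (ι Q m) = ι (-Q' Q) (m, 0) * ι (-Q' Q) (0, 1) := by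
  have h : toEven Q (ι Q m) = (even.ι (Q' Q)).bilin (0, 1) (m, 0) :=
    Subtype.ext (toEven_ι Q m)
  have hortho : (-Q' Q).IsOrtho (0, 1) (m, 0) := by
    simp [QuadraticMap.IsOrtho]
  calc toEvenNeg Q (ι Q m) = -(ι (-Q' Q) (0, 1) * ι (-Q' Q) (m, 0)) := by
        change ((evenEquivEvenNeg (Q' Q) (toEven Q (ι Q m)) : even (-Q' Q)) :
          CliffordAlgebra (-Q' Q)) = _
        rw [h, evenEquivEvenNeg_apply, evenToNeg_ι]
        rfl
    _ = ι (-Q' Q) (m, 0) * ι (-Q' Q) (0, 1) := by rw [ι_mul_ι_comm_of_isOrtho hortho, neg_neg]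

end CliffordAlgebra

section Pin

variable {V : Type*} [AddCommGroup V] [Module ℝ V] {Q : QuadraticForm ℝ V}

variable (Q) in
def pinGenerators : Set (CliffordAlgebra Q)ˣ :=
  {u | ∃ ξ : V, (↑u : CliffordAlgebra Q) = ι Q ξ ∧ (Q ξ = 1 ∨ Q ξ = -1)}

theorem pinGrp_hom_ext {G : Type*} [Group G] {φ ψ : pinGrp Q →* G}
    (h : ∀ u : pinGrp Q, (u : (CliffordAlgebra Q)ˣ) ∈ pinGenerators Q → φ u = ψ u) : φ = ψ :=
  MonoidHom.eq_of_eqOn_dense Subgroup.closure_closure_coe_preimage h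

theorem exists_mem_pinGrp_coe_eq_ι {ξ : V} (hξ : Q ξ = 1 ∨ Q ξ = -1) :
    ∃ w ∈ pinGrp Q, (w : CliffordAlgebra Q) = ι Q ξ := by
  have hunit : IsUnit (ι Q ξ) :=
    isUnit_ι_of_isUnit Q <| hξ.elim (fun h => h ▸ isUnit_one) (fun h => h ▸ isUnit_one.neg)
  exact ⟨hunit.unit, Subgroup.subset_closure ⟨ξ, rfl, hξ⟩, rfl⟩

theorem mem_spinGrp_of_coe_eq_ι_mul_ι {u : (CliffordAlgebra Q)ˣ} {a b : V}
    (hu : (u : CliffordAlgebra Q) = ι Q a * ι Q b)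
    (ha : Q a = 1 ∨ Q a = -1) (hb : Q b = 1 ∨ Q b = -1) : u ∈ spinGrp Q := by
  obtain ⟨wa, hwa_mem, hwa⟩ := exists_mem_pinGrp_coe_eq_ι ha
  obtain ⟨wb, hwb_mem, hwb⟩ := exists_mem_pinGrp_coe_eq_ι hb
  have hu' : u = wa * wb := Units.ext (by rw [hu, Units.val_mul, hwa, hwb])
  exact ⟨hu' ▸ mul_mem hwa_mem hwb_mem, hu ▸ ι_mul_ι_mem_evenOdd_zero Q a b⟩

end Pin

section Signature

variable {n : ℕ}

theorem Qsig_zero_apply (ξ : Fin n → ℝ) : Qsig n 0 ξ = -∑ i, ξ i * ξ i := by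
  simp [Qsig, QuadraticMap.weightedSumSquares_apply, Finset.sum_neg_distrib]

theorem Qsig_zero_nonpos (ξ : Fin n → ℝ) : Qsig n 0 ξ ≤ 0 := by
  rw [Qsig_zero_apply, neg_nonpos]
  exact Finset.sum_nonneg fun i _ => mul_self_nonneg (ξ i)

theorem Qsig_zero_eq_neg_one_of_eq_one_or_eq_neg_one {ξ : Fin n → ℝ}
    (h : Qsig n 0 ξ = 1 ∨ Qsig n 0 ξ = -1) : Qsig n 0 ξ = -1 :=
  h.resolve_left fun h1 => by linarith [Qsig_zero_nonpos ξ]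

theorem Qsig_succ_snoc (ξ : Fin n → ℝ) (t : ℝ) :
    Qsig (n + 1) (n + 1) (Fin.snoc ξ t) = t * t - Qsig n 0 ξ := by
  simp [Qsig, QuadraticMap.weightedSumSquares_apply, Fin.sum_univ_castSucc, add_comm]

variable (n) in
def snocLinearEquiv : ((Fin n → ℝ) × ℝ) ≃ₗ[ℝ] (Fin (n + 1) → ℝ) where
  toFun p := Fin.snoc p.1 p.2
  invFun y := (Fin.init y, y (Fin.last n))
  map_add' p q := by
    ext i
    induction i using Fin.lastCases <;> simp
  map_smul' c p := by
    ext i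
    induction i using Fin.lastCases <;> simp
  left_inv p := by simp
  right_inv y := by simp

theorem snocLinearEquiv_apply_zero (ξ : Fin n → ℝ) : snocLinearEquiv n (ξ, 0) = jmap n ξ := rfl

theorem snocLinearEquiv_apply_last : snocLinearEquiv n (0, 1) = elast n := by
  ext i
  induction i using Fin.lastCases <;> simp [snocLinearEquiv, elast]

variable (n) in
def snocIsometryEquiv : (-EquivEven.Q' (Qsig n 0)).IsometryEquiv (Qsig (n + 1) (n + 1)) where
  __ := snocLinearEquiv n
  map_app' p := by
    change Qsig (n + 1) (n + 1) (Fin.snoc p.1 p.2) = -(EquivEven.Q' _ p)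
    rw [Qsig_succ_snoc, EquivEven.Q'_apply, neg_sub]

theorem Qsig_succ_jmap (ξ : Fin n → ℝ) : Qsig (n + 1) (n + 1) (jmap n ξ) = -Qsig n 0 ξ := by
  rw [jmap, Qsig_succ_snoc, mul_zero, zero_sub]

theorem Qsig_succ_elast : Qsig (n + 1) (n + 1) (elast n) = 1 := by
  rw [← snocLinearEquiv_apply_last]
  simp [snocLinearEquiv, Qsig_succ_snoc]

end Signature

section PinMinus

variable (n : ℕ)

def cliffordSuccEmbedding :
    CliffordAlgebra (Qsig n 0) →ₐ[ℝ] CliffordAlgebra (Qsig (n + 1) (n + 1)) :=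
  (map (snocIsometryEquiv n).toIsometry).comp (toEvenNeg (Qsig n 0))

theorem cliffordSuccEmbedding_injective : Function.Injective (cliffordSuccEmbedding n) :=
  (equivOfIsometry (snocIsometryEquiv n)).injective.comp (toEvenNeg_injective _)

theorem cliffordSuccEmbedding_ι (ξ : Fin n → ℝ) :
    cliffordSuccEmbedding n (ι (Qsig n 0) ξ) =
      ι (Qsig (n + 1) (n + 1)) (jmap n ξ) * ι (Qsig (n + 1) (n + 1)) (elast n) := by
  rw [cliffordSuccEmbedding, AlgHom.comp_apply, toEvenNeg_ι, map_mul, map_apply_ι, map_apply_ι,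
    ← snocLinearEquiv_apply_zero, ← snocLinearEquiv_apply_last]
  rfl

def pinMinusToUnits : pinGrp (Qsig n 0) →* (CliffordAlgebra (Qsig (n + 1) (n + 1)))ˣ :=
  (Units.map (cliffordSuccEmbedding n).toMonoidHom).comp (pinGrp (Qsig n 0)).subtype

theorem coe_pinMinusToUnits (u : pinGrp (Qsig n 0)) :
    ((pinMinusToUnits n u : (CliffordAlgebra (Qsig (n + 1) (n + 1)))ˣ) :
        CliffordAlgebra (Qsig (n + 1) (n + 1))) =
      cliffordSuccEmbedding n ((u : (CliffordAlgebra (Qsig n 0))ˣ) : CliffordAlgebra (Qsig n 0)) :=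
  rfl

def SendsReflections (φ : pinGrp (Qsig n 0) →* (CliffordAlgebra (Qsig (n + 1) (n + 1)))ˣ) :
    Prop :=
  ∀ (u : pinGrp (Qsig n 0)) (ξ : Fin n → ℝ),
    ((u : (CliffordAlgebra (Qsig n 0))ˣ) : CliffordAlgebra (Qsig n 0)) = ι (Qsig n 0) ξ →
    Qsig n 0 ξ = -1 →
    ((φ u : (CliffordAlgebra (Qsig (n + 1) (n + 1)))ˣ) : CliffordAlgebra (Qsig (n + 1) (n + 1))) =
      ι (Qsig (n + 1) (n + 1)) (jmap n ξ) * ι (Qsig (n + 1) (n + 1)) (elast n)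

theorem sendsReflections_pinMinusToUnits : SendsReflections n (pinMinusToUnits n) :=
  fun u ξ hu _ => by rw [coe_pinMinusToUnits, hu, cliffordSuccEmbedding_ι]

variable {n} in
theorem SendsReflections.eq_pinMinusToUnits {φ} (hφ : SendsReflections n φ) :
    φ = pinMinusToUnits n :=
  pinGrp_hom_ext fun u ⟨ξ, hu, hξ⟩ => Units.ext <| by
    have hξ' := Qsig_zero_eq_neg_one_of_eq_one_or_eq_neg_one hξ
    rw [hφ u ξ hu hξ', sendsReflections_pinMinusToUnits n u ξ hu hξ']

theorem pinMinusToUnits_injective : Function.Injective (pinMinusToUnits n) :=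
  (Units.map_injective (cliffordSuccEmbedding_injective n)).comp Subtype.val_injective

theorem pinMinusToUnits_mem_spinGrp (u : pinGrp (Qsig n 0)) :
    pinMinusToUnits n u ∈ spinGrp (Qsig (n + 1) (n + 1)) := by
  have hle : pinGrp (Qsig n 0) ≤
      (spinGrp (Qsig (n + 1) (n + 1))).comap (Units.map (cliffordSuccEmbedding n).toMonoidHom) :=
    Subgroup.closure_le _ |>.mpr fun v ⟨ξ, hv, hξ⟩ => by
      refine mem_spinGrp_of_coe_eq_ι_mul_ι (a := jmap n ξ) (b := elast n) ?_ (.inl ?_)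
        (.inl Qsig_succ_elast)
      · exact (congrArg (cliffordSuccEmbedding n) hv).trans (cliffordSuccEmbedding_ι n ξ)
      · rw [Qsig_succ_jmap, Qsig_zero_eq_neg_one_of_eq_one_or_eq_neg_one hξ, neg_neg]
  exact hle u.2

end PinMinus

theorem pinMinus_embeds_in_spin_succ_general (n : ℕ) :
    (∀ ξ : Fin n → ℝ, Qsig (n + 1) (n + 1) (jmap n ξ) = -(Qsig n 0 ξ)) ∧
    Qsig (n + 1) (n + 1) (elast n) = 1 ∧
    (∃! φ : pinGrp (Qsig n 0) →* (CliffordAlgebra (Qsig (n + 1) (n + 1)))ˣ,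
      ∀ (u : pinGrp (Qsig n 0)) (ξ : Fin n → ℝ),
        ((u : (CliffordAlgebra (Qsig n 0))ˣ) : CliffordAlgebra (Qsig n 0)) = ι (Qsig n 0) ξ →
        Qsig n 0 ξ = -1 →
        ((φ u : (CliffordAlgebra (Qsig (n + 1) (n + 1)))ˣ) :
            CliffordAlgebra (Qsig (n + 1) (n + 1))) =
          ι (Qsig (n + 1) (n + 1)) (jmap n ξ) * ι (Qsig (n + 1) (n + 1)) (elast n)) ∧
    (∀ φ : pinGrp (Qsig n 0) →* (CliffordAlgebra (Qsig (n + 1) (n + 1)))ˣ,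
      (∀ (u : pinGrp (Qsig n 0)) (ξ : Fin n → ℝ),
        ((u : (CliffordAlgebra (Qsig n 0))ˣ) : CliffordAlgebra (Qsig n 0)) = ι (Qsig n 0) ξ →
        Qsig n 0 ξ = -1 →
        ((φ u : (CliffordAlgebra (Qsig (n + 1) (n + 1)))ˣ) :
            CliffordAlgebra (Qsig (n + 1) (n + 1))) =
          ι (Qsig (n + 1) (n + 1)) (jmap n ξ) * ι (Qsig (n + 1) (n + 1)) (elast n)) →
      Function.Injective φ ∧ ∀ u, φ u ∈ spinGrp (Qsig (n + 1) (n + 1))) := by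
  refine ⟨Qsig_succ_jmap, Qsig_succ_elast,
    ⟨pinMinusToUnits n, sendsReflections_pinMinusToUnits n,
      fun _ hφ => SendsReflections.eq_pinMinusToUnits hφ⟩, fun φ hφ => ?_⟩
  obtain rfl : φ = pinMinusToUnits n := SendsReflections.eq_pinMinusToUnits hφ
  exact ⟨pinMinusToUnits_injective n, pinMinusToUnits_mem_spinGrp n⟩

/-- **`Pin⁻_n` embeds into `Spin_{n+1}`.**
With `j : ℝⁿ → ℝⁿ⁺¹`, `x ↦ (x,0)` and `e = (0,…,0,1)` viewed inside the positive definite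
Clifford algebra `Cl_{n+1,0}`, one has `Q_{n+1,0}(j ξ) = -Q_{0,n}(ξ)` and `Q_{n+1,0}(e) = 1`;
there is a unique group homomorphism `φ : Pin_{0,n} → (Cl_{n+1,0})ˣ` with
`φ (ι ξ) = ι (j ξ) * ι e` for all `ξ` with `Q_{0,n} ξ = -1`, and any such `φ` is injective
with image contained in `Spin_{n+1,0}`. -/
theorem pinMinus_embeds_in_spin_succ (n : ℕ) (hn : 1 ≤ n) :
    (∀ ξ : Fin n → ℝ, Qsig (n + 1) (n + 1) (jmap n ξ) = -(Qsig n 0 ξ)) ∧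
    Qsig (n + 1) (n + 1) (elast n) = 1 ∧
    (∃! φ : pinGrp (Qsig n 0) →* (CliffordAlgebra (Qsig (n + 1) (n + 1)))ˣ,
      ∀ (u : pinGrp (Qsig n 0)) (ξ : Fin n → ℝ),
        ((u : (CliffordAlgebra (Qsig n 0))ˣ) : CliffordAlgebra (Qsig n 0)) = ι (Qsig n 0) ξ →
        Qsig n 0 ξ = -1 →
        ((φ u : (CliffordAlgebra (Qsig (n + 1) (n + 1)))ˣ) :
            CliffordAlgebra (Qsig (n + 1) (n + 1))) =
          ι (Qsig (n + 1) (n + 1)) (jmap n ξ) * ι (Qsig (n + 1) (n + 1)) (elast n)) ∧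
    (∀ φ : pinGrp (Qsig n 0) →* (CliffordAlgebra (Qsig (n + 1) (n + 1)))ˣ,
      (∀ (u : pinGrp (Qsig n 0)) (ξ : Fin n → ℝ),
        ((u : (CliffordAlgebra (Qsig n 0))ˣ) : CliffordAlgebra (Qsig n 0)) = ι (Qsig n 0) ξ →
        Qsig n 0 ξ = -1 →
        ((φ u : (CliffordAlgebra (Qsig (n + 1) (n + 1)))ˣ) :
            CliffordAlgebra (Qsig (n + 1) (n + 1))) =
          ι (Qsig (n + 1) (n + 1)) (jmap n ξ) * ι (Qsig (n + 1) (n + 1)) (elast n)) →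
      Function.Injective φ ∧ ∀ u, φ u ∈ spinGrp (Qsig (n + 1) (n + 1))) :=
  pinMinus_embeds_in_spin_succ_general n
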